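/- arXiv:1410.8110 — 4 statements merged into one kernel-verified Lean document; each statement's English description precedes it below -/
import Mathlib

section
/- Let M be a 4-dimensional vector space over the field with 2 elements, equipped with a nondegenerate alternating bilinear form. Then M has exactly 15 maximal isotropic (Lagrangian) subspaces, i.e., exactly 15 two-dimensional subspaces on which the form vanishes identically. -/
/-!
Double counting. Call `(x, y)` an isotropic pair if it is linearly independent and
`B x y = 0`. Over `𝔽_q` in dimension `n`, nondegeneracy makes `ker (B x)` a hyperplane
containing `x` for every `x ≠ 0`, so there are `(q ^ n - 1) * (q ^ (n - 1) - q)` isotropic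
pairs. An isotropic pair spans an isotropic plane, and each isotropic plane arises from
exactly its `(q ^ 2 - 1) * (q ^ 2 - q)` ordered bases. For `q = 2`, `n = 4` this gives
`15 * 6 = N * 6`.
-/

open Module LinearMap Submodule

namespace LinearMap

variable {K V : Type*} [Field K] [AddCommGroup V] [Module K V]

def isotropicSubmodules (B : V →ₗ[K] V →ₗ[K] K) (k : ℕ) : Set (Submodule K V) :=
  {N | finrank K N = k ∧ ∀ x ∈ N, ∀ y ∈ N, B x y = 0}

def isotropicPairs (B : V →ₗ[K] V →ₗ[K] K) : Set (Fin 2 → V) :=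
  {s | LinearIndependent K s ∧ B (s 0) (s 1) = 0}

variable {B : V →ₗ[K] V →ₗ[K] K}

theorem isotropic_span {S : Set V} (hS : ∀ x ∈ S, ∀ y ∈ S, B x y = 0) :
    ∀ x ∈ span K S, ∀ y ∈ span K S, B x y = 0 := by
  have hleft : ∀ x ∈ S, ∀ y ∈ span K S, B x y = 0 := fun x hx y hy =>
    (span_le (p := ker (B x)).2 fun y hy' => hS x hx y hy') hy
  intro x hx y hy
  exact (span_le (p := ker (B.flip y)).2 fun x hx' => hleft x hx' y hy) hx

variable [Fintype K] [FiniteDimensional K V]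

local notation "q" => Fintype.card K

theorem card_linearIndependent_pair_right {W : Submodule K V} {x : V}
    (hxW : x ∈ W) (hx : x ≠ 0) :
    Nat.card {y : V // y ∈ W ∧ LinearIndependent K ![x, y]} = q ^ finrank K W - q := by
  have hset : {y : V | y ∈ W ∧ LinearIndependent K ![x, y]} = (W : Set V) \ (K ∙ x) := by
    ext y
    simp [LinearIndependent.pair_iff' hx, mem_span_singleton]
  have : Finite V := Module.finite_of_finite K
  calc Nat.card {y : V // y ∈ W ∧ LinearIndependent K ![x, y]}
      = ((W : Set V) \ (K ∙ x)).ncard := by rw [← hset]; rfl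
    _ = Nat.card W - Nat.card (K ∙ x) :=
      Set.ncard_sdiff ((span_singleton_le_iff_mem x W).2 hxW)
    _ = q ^ finrank K W - q := by
      rw [natCard_eq_pow_finrank (K := K), natCard_eq_pow_finrank (K := K) (V := K ∙ x),
        finrank_span_singleton hx, pow_one, Nat.card_eq_fintype_card]

theorem card_isotropicPairs (hB : B.IsAlt) (hsep : B.SeparatingLeft) :
    Nat.card B.isotropicPairs = (q ^ finrank K V - 1) * (q ^ (finrank K V - 1) - q) := by
  classical
  have : Finite V := Module.finite_of_finite K
  have : Fintype V := Fintype.ofFinite V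
  have hfiber : ∀ x : V, Nat.card {y : V // LinearIndependent K ![x, y] ∧ B x y = 0} =
      if x = 0 then 0 else q ^ (finrank K V - 1) - q := by
    intro x
    split_ifs with hx
    · subst hx
      have : IsEmpty {y : V // LinearIndependent K ![0, y] ∧ B 0 y = 0} :=
        ⟨fun y => y.2.1.ne_zero 0 rfl⟩
      exact Nat.card_of_isEmpty
    · have hBx : B x ≠ 0 := fun h => hx (separatingLeft_iff_linear_nontrivial.1 hsep x h)
      have hrank : finrank K (ker (B x)) = finrank K V - 1 := by
        have := Module.Dual.finrank_ker_add_one_of_ne_zero hBx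
        omega
      rw [← hrank, ← card_linearIndependent_pair_right (hB x) hx]
      exact Nat.card_congr <| Equiv.subtypeEquivRight fun y => by rw [mem_ker, and_comm]
  calc Nat.card B.isotropicPairs
      = Nat.card {p : V × V // LinearIndependent K ![p.1, p.2] ∧ B p.1 p.2 = 0} :=
        Nat.card_congr <| (finTwoArrowEquiv V).subtypeEquiv fun s => by
          rw [← FinVec.etaExpand_eq s]; rfl
    _ = ∑ x : V, Nat.card {y : V // LinearIndependent K ![x, y] ∧ B x y = 0} := by
        rw [Nat.card_congr (Equiv.subtypeProdEquivSigmaSubtype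
          fun x y => LinearIndependent K ![x, y] ∧ B x y = 0), Nat.card_sigma]
    _ = (q ^ finrank K V - 1) * (q ^ (finrank K V - 1) - q) := by
        rw [← Finset.sum_erase_add _ _ (Finset.mem_univ 0), Finset.sum_congr rfl
          fun x hx => (hfiber x).trans (if_neg (Finset.ne_of_mem_erase hx)), hfiber, if_pos rfl,
          Finset.sum_const, Finset.card_erase_of_mem (Finset.mem_univ 0), Finset.card_univ,
          ← Module.card_eq_pow_finrank, smul_eq_mul, add_zero]

theorem card_linearIndependent_span_eq {N : Submodule K V} {k : ℕ} (hN : finrank K N = k) :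
    Nat.card {s : Fin k → V // LinearIndependent K s ∧ span K (Set.range s) = N} =
      ∏ i : Fin k, (q ^ k - q ^ i.val) := by
  have hspan : ∀ s : Fin k → V, LinearIndependent K s →
      (span K (Set.range s) = N ↔ ∀ i, s i ∈ N) := fun s hs =>
    ⟨fun h i => h ▸ subset_span (Set.mem_range_self i), fun h =>
      eq_of_le_of_finrank_eq (span_le.2 (Set.range_subset_iff.2 h))
        (by rw [finrank_span_eq_card hs, Fintype.card_fin, hN])⟩
  have : Finite V := Module.finite_of_finite K
  subst hN
  rw [← card_linearIndependent le_rfl]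
  exact Nat.card_congr
    { toFun := fun s => ⟨fun i => ⟨s.1 i, (hspan s.1 s.2.1).1 s.2.2 i⟩,
        LinearIndependent.of_comp N.subtype s.2.1⟩
      invFun := fun t => ⟨N.subtype ∘ t.1, t.2.map' _ N.ker_subtype,
        (hspan _ (t.2.map' _ N.ker_subtype)).2 fun i => (t.1 i).2⟩
      left_inv := fun s => rfl
      right_inv := fun t => rfl }

theorem card_isotropicPairs_eq_card_isotropicSubmodules_mul (hB : B.IsAlt) :
    Nat.card B.isotropicPairs =
      Nat.card (B.isotropicSubmodules 2) * ((q ^ 2 - 1) * (q ^ 2 - q)) := by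
  classical
  have : Finite V := Module.finite_of_finite K
  have : Finite (Submodule K V) := Finite.of_injective _ SetLike.coe_injective
  have : Fintype (B.isotropicSubmodules 2) := Fintype.ofFinite _
  let plane (s : B.isotropicPairs) : B.isotropicSubmodules 2 :=
    ⟨span K (Set.range s.1), by rw [finrank_span_eq_card s.2.1, Fintype.card_fin],
      isotropic_span <| by
        rintro _ ⟨i, rfl⟩ _ ⟨j, rfl⟩
        fin_cases i <;> fin_cases j
        exacts [hB _, s.2.2, hB.eq_iff.1 s.2.2, hB _]⟩
  have hfiber (N : B.isotropicSubmodules 2) : Nat.card {s // plane s = N} =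
      (q ^ 2 - 1) * (q ^ 2 - q) := by
    have hmem {s : Fin 2 → V} (h : span K (Set.range s) = N) (i : Fin 2) :
        s i ∈ (N : Submodule K V) :=
      h ▸ subset_span (Set.mem_range_self i)
    calc Nat.card {s // plane s = N}
        = Nat.card {s : Fin 2 → V // LinearIndependent K s ∧ span K (Set.range s) = N} :=
          Nat.card_congr
            { toFun := fun t => ⟨t.1.1, t.1.2.1, congrArg Subtype.val t.2⟩
              invFun := fun s => ⟨⟨s.1, s.2.1, N.2.2 _ (hmem s.2.2 0) _ (hmem s.2.2 1)⟩,
                Subtype.ext s.2.2⟩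
              left_inv := fun t => rfl
              right_inv := fun s => rfl }
      _ = (q ^ 2 - 1) * (q ^ 2 - q) := by
          rw [card_linearIndependent_span_eq N.2.1, Fin.prod_univ_two]
          simp
  rw [Nat.card_congr (Equiv.sigmaFiberEquiv plane).symm, Nat.card_sigma,
    Finset.sum_congr rfl fun N _ => hfiber N, Finset.sum_const, smul_eq_mul,
    Finset.card_univ, Nat.card_eq_fintype_card]

end LinearMap

/-- A 4-dimensional vector space over `𝔽₂` with a nondegenerate alternating
bilinear form has exactly 15 maximal isotropic (Lagrangian) subspaces, i.e.
exactly 15 two-dimensional subspaces on which the form vanishes identically. -/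
theorem stmt_3 (M : Type*) [AddCommGroup M] [Module (ZMod 2) M]
    (hdim : Module.finrank (ZMod 2) M = 4)
    (B : M →ₗ[ZMod 2] M →ₗ[ZMod 2] ZMod 2)
    (halt : ∀ x, B x x = 0)
    (hnd : Function.Bijective fun x => B.flip x) :
    Nat.card {N : Submodule (ZMod 2) M |
      Module.finrank (ZMod 2) N = 2 ∧ ∀ x ∈ N, ∀ y ∈ N, B x y = 0} = 15 := by
  have : FiniteDimensional (ZMod 2) M := Module.finite_of_finrank_pos (by omega)
  have hB : B.IsAlt := halt
  have hsep : B.SeparatingLeft :=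
    (hB.isRefl.nondegenerate_iff_separatingRight.2 <|
      separatingRight_iff_flip_ker_eq_bot.2 <| ker_eq_bot.2 hnd.injective).1
  have hcount := card_isotropicPairs hB hsep
  rw [card_isotropicPairs_eq_card_isotropicSubmodules_mul hB, hdim, ZMod.card] at hcount
  change Nat.card (B.isotropicSubmodules 2) = 15
  omega
end

section
/- Let N be a maximal isotropic subgroup of (ℤ/2ⁿℤ)⁴ with respect to a nondegenerate alternating ℤ/2ⁿℤ-bilinear pairing, where n ≥ 1. Then the rank of N (the F₂-dimension of N ⊗ F₂) is at least 2, and if N does not contain the full 2-torsion subgroup, its rank is 2 or 3. -/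
/-! A finite abelian group killed by `m ^ k` has order at most `|G[m]| ^ k` (induct through
`G → m • G`, whose kernel is `G[m]`). Applied with `m ^ k` the exponent, this shows that a finite
`p`-group with `|G[p]| ≤ p` is cyclic. So if the 2-rank of `N` were at most one, `N` would be
cyclic of order at most `2ⁿ`, generated by some `g`; the kernel of `B(·, g)` is orthogonal to `N`,
hence lies in `N`, and has index at most `2ⁿ`, giving `2⁴ⁿ ≤ 2ⁿ · 2ⁿ`. Finally `|N[2]|` divides
`|M| = 2⁴ⁿ`, so it is a power of two, and it is below `|M[2]| = 16` unless `M[2] ≤ N`. -/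

/-- The rank of a finite abelian 2-group (the `𝔽₂`-dimension of `G ⊗ 𝔽₂`),
computed as `log₂` of the cardinality of the 2-torsion subgroup. -/
noncomputable def twoRank (G : Type*) [AddCommGroup G] : ℕ :=
  Nat.log 2 (Nat.card {x : G // x + x = 0})

section TorsionCounting

variable {G : Type*} [AddCommGroup G]

theorem card_le_card_nsmul_eq_zero_pow [Finite G] (m : ℕ) {n : ℕ}
    (h : ∀ x : G, m ^ n • x = 0) : Nat.card G ≤ Nat.card {x : G // m • x = 0} ^ n := by
  induction n generalizing G with
  | zero =>
    have : Subsingleton G := ⟨fun x y => by simpa using (h x).trans (h y).symm⟩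
    simp
  | succ n ih =>
    let f : G →+ G := nsmulAddMonoidHom m
    have hrange_killed : ∀ y : f.range, m ^ n • y = 0 := by
      rintro ⟨_, x, rfl⟩
      ext
      simpa [f, smul_smul, ← pow_succ] using h x
    have hrange_torsion :
        Nat.card {y : f.range // m • y = 0} ≤ Nat.card {x : G // m • x = 0} :=
      Nat.card_le_card_of_injective (fun y => ⟨y.1, congrArg Subtype.val y.2⟩) fun y z hyz => by
        ext; simpa using hyz
    calc Nat.card G = Nat.card f.ker * Nat.card f.range := by
          rw [← AddSubgroup.index_ker, AddSubgroup.card_mul_index]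
      _ ≤ Nat.card {x : G // m • x = 0} * Nat.card {x : G // m • x = 0} ^ n :=
          Nat.mul_le_mul_left _ ((ih hrange_killed).trans (Nat.pow_le_pow_left hrange_torsion n))
      _ = Nat.card {x : G // m • x = 0} ^ (n + 1) := (pow_succ' _ _).symm

theorem isAddCyclic_of_card_nsmul_prime_eq_zero_le [Finite G] {p n : ℕ} (hp : p.Prime)
    (h : ∀ x : G, p ^ n • x = 0) (hcard : Nat.card {x : G // p • x = 0} ≤ p) :
    IsAddCyclic G := by
  obtain ⟨k, -, hk⟩ := (Nat.dvd_prime_pow hp).mp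
    (AddMonoid.exponent_dvd_iff_forall_nsmul_eq_zero.mpr h)
  have hle : Nat.card G ≤ AddMonoid.exponent G := hk ▸
    (card_le_card_nsmul_eq_zero_pow p (hk ▸ AddMonoid.exponent_nsmul_eq_zero)).trans
      (Nat.pow_le_pow_left hcard k)
  exact IsAddCyclic.of_exponent_eq_card <| le_antisymm
    (Nat.le_of_dvd Nat.card_pos AddGroup.exponent_dvd_nat_card) hle

theorem card_add_self_eq_zero_dvd_card : Nat.card {x : G // x + x = 0} ∣ Nat.card G := by
  have h := ((nsmulAddMonoidHom 2 : G →+ G).ker).card_addSubgroup_dvd_card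
  simpa only [AddMonoidHom.mem_ker, nsmulAddMonoidHom_apply, two_nsmul] using h

theorem card_add_self_eq_zero_le_two [Finite G] [IsAddCyclic G] :
    Nat.card {x : G // x + x = 0} ≤ 2 := by
  classical
  have := Fintype.ofFinite G
  simpa [Nat.card_eq_fintype_card, Fintype.card_subtype, two_nsmul] using
    IsAddCyclic.card_nsmul_eq_zero_le (α := G) two_pos

theorem card_pi_add_self_eq_zero_le {ι : Type*} [Fintype ι] [Finite G] [IsAddCyclic G] :
    Nat.card {x : ι → G // x + x = 0} ≤ 2 ^ Fintype.card ι := by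
  have e : {x : ι → G // x + x = 0} ≃ ∀ i, {a : G // a + a = 0} :=
    (Equiv.subtypeEquivRight fun x => funext_iff).trans
      (Equiv.subtypePiEquivPi (p := fun _ a => a + a = 0))
  rw [Nat.card_congr e, Nat.card_pi]
  exact Finset.prod_le_pow_card _ _ _ fun _ _ => card_add_self_eq_zero_le_two

end TorsionCounting

theorem card_add_self_eq_zero_lt_of_not_le {R M : Type*} [CommRing R] [AddCommGroup M]
    [Module R M] [Finite M] {N : Submodule R M} (h : ¬ Submodule.torsionBy R M 2 ≤ N) :
    Nat.card {x : N // x + x = 0} < Nat.card {x : M // x + x = 0} := by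
  obtain ⟨t, ht, htN⟩ := SetLike.not_le_iff_exists.mp h
  rw [Submodule.mem_torsionBy_iff, two_smul] at ht
  let e : {x : N // x + x = 0} ≃ {x : {x : M // x + x = 0} // x.1 ∈ N} :=
    { toFun := fun x => ⟨⟨x.1, congrArg Subtype.val x.2⟩, x.1.2⟩
      invFun := fun x => ⟨⟨x.1.1, x.2⟩, Subtype.ext x.1.2⟩
      left_inv := fun _ => rfl
      right_inv := fun _ => rfl }
  rw [Nat.card_congr e]
  exact Finite.card_subtype_lt (x := ⟨t, ht⟩) htN

theorem card_le_card_mul_card_of_coisotropic {R M : Type*} [CommRing R] [Finite R]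
    [AddCommGroup M] [Module R M] [Finite M] (B : M →ₗ[R] M →ₗ[R] R) (N : Submodule R M)
    (hcoiso : ∀ x, (∀ y ∈ N, B x y = 0) → x ∈ N) [IsAddCyclic N] :
    Nat.card M ≤ Nat.card N * Nat.card R := by
  obtain ⟨g, hg⟩ := IsAddCyclic.exists_generator (α := N)
  have hker : LinearMap.ker (B.flip g) ≤ N := fun x hx => hcoiso x fun y hy => by
    obtain ⟨k, hk⟩ := hg ⟨y, hy⟩
    have hy' : y = k • (g : M) := by simpa using (congrArg Subtype.val hk).symm
    rw [hy', map_zsmul, ← B.flip_apply, LinearMap.mem_ker.mp hx, smul_zero]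
  calc Nat.card M = Nat.card (LinearMap.ker (B.flip g)) * Nat.card (M ⧸ LinearMap.ker (B.flip g)) :=
        Submodule.card_eq_card_quotient_mul_card _
    _ ≤ Nat.card N * Nat.card R := by
        refine Nat.mul_le_mul (Nat.card_le_card_of_injective _ (Submodule.inclusion_injective hker))
          ?_
        rw [Nat.card_congr (B.flip g).quotKerEquivRange.toEquiv]
        exact Nat.card_le_card_of_injective _ Subtype.val_injective

theorem lt_card_nsmul_eq_zero_of_coisotropic {p n : ℕ} [hp : Fact p.Prime] {M : Type*}
    [AddCommGroup M] [Module (ZMod (p ^ n)) M] [Finite M] (hM : p ^ n * p ^ n < Nat.card M)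
    (B : M →ₗ[ZMod (p ^ n)] M →ₗ[ZMod (p ^ n)] ZMod (p ^ n)) (N : Submodule (ZMod (p ^ n)) M)
    (hcoiso : ∀ x, (∀ y ∈ N, B x y = 0) → x ∈ N) :
    p < Nat.card {x : N // p • x = 0} := by
  by_contra! hsmall
  have hkill : ∀ x : N, p ^ n • x = 0 := ZModModule.char_nsmul_eq_zero _
  have := isAddCyclic_of_card_nsmul_prime_eq_zero_le hp.out hkill hsmall
  have hN : Nat.card N ≤ p ^ n :=
    (card_le_card_nsmul_eq_zero_pow p hkill).trans (Nat.pow_le_pow_left hsmall n)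
  have hM' := card_le_card_mul_card_of_coisotropic B N hcoiso
  rw [Nat.card_zmod] at hM'
  exact absurd (hM'.trans (Nat.mul_le_mul_right _ hN)) hM.not_ge

theorem stmt_9_general (n : ℕ) (hn : 1 ≤ n)
    (B : (Fin 4 → ZMod (2 ^ n)) →ₗ[ZMod (2 ^ n)] (Fin 4 → ZMod (2 ^ n))
      →ₗ[ZMod (2 ^ n)] ZMod (2 ^ n))
    (N : Submodule (ZMod (2 ^ n)) (Fin 4 → ZMod (2 ^ n)))
    (hmax : ∀ x, (∀ y ∈ N, B x y = 0) → x ∈ N) :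
    2 ≤ twoRank ↥N ∧
      (¬ Submodule.torsionBy (ZMod (2 ^ n)) (Fin 4 → ZMod (2 ^ n)) 2 ≤ N →
        twoRank ↥N = 2 ∨ twoRank ↥N = 3) := by
  have hcardM : Nat.card (Fin 4 → ZMod (2 ^ n)) = 2 ^ (n * 4) := by
    simp [← pow_mul]
  obtain ⟨j, -, hj⟩ : ∃ j ≤ n * 4, Nat.card {x : N // x + x = 0} = 2 ^ j := by
    rw [← Nat.dvd_prime_pow Nat.prime_two, ← hcardM]
    exact card_add_self_eq_zero_dvd_card.trans N.toAddSubgroup.card_addSubgroup_dvd_card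
  have hrank : twoRank N = j := by rw [twoRank, hj, Nat.log_pow one_lt_two]
  have hlower : 1 < j := by
    have hM : 2 ^ n * 2 ^ n < Nat.card (Fin 4 → ZMod (2 ^ n)) := by
      rw [hcardM, ← pow_add]; exact Nat.pow_lt_pow_right one_lt_two (by omega)
    have := lt_card_nsmul_eq_zero_of_coisotropic (p := 2) hM B N hmax
    simp only [two_nsmul, hj] at this
    exact (Nat.pow_lt_pow_iff_right one_lt_two).mp (by rwa [pow_one])
  have hupper (hT : ¬ Submodule.torsionBy (ZMod (2 ^ n)) (Fin 4 → ZMod (2 ^ n)) 2 ≤ N) :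
      j < 4 := by
    rw [← Nat.pow_lt_pow_iff_right one_lt_two, ← hj]
    exact (card_add_self_eq_zero_lt_of_not_le hT).trans_le card_pi_add_self_eq_zero_le
  rw [hrank]
  exact ⟨hlower, fun hT => by have := hupper hT; omega⟩

/-- Let `N` be a maximal isotropic subgroup of `(ℤ/2ⁿℤ)⁴` (n ≥ 1) for a
nondegenerate alternating pairing.  Then the rank of `N` is at least 2, and if
`N` does not contain the full 2-torsion subgroup, its rank is 2 or 3. -/
theorem stmt_9 (n : ℕ) (hn : 1 ≤ n)
    (B : (Fin 4 → ZMod (2 ^ n)) →ₗ[ZMod (2 ^ n)] (Fin 4 → ZMod (2 ^ n))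
      →ₗ[ZMod (2 ^ n)] ZMod (2 ^ n))
    (halt : ∀ x, B x x = 0)
    (hnd : Function.Bijective fun x => B.flip x)
    (N : Submodule (ZMod (2 ^ n)) (Fin 4 → ZMod (2 ^ n)))
    (hiso : ∀ x ∈ N, ∀ y ∈ N, B x y = 0)
    (hmax : ∀ x, (∀ y ∈ N, B x y = 0) → x ∈ N) :
    2 ≤ twoRank ↥N ∧
      (¬ Submodule.torsionBy (ZMod (2 ^ n)) (Fin 4 → ZMod (2 ^ n)) 2 ≤ N →
        twoRank ↥N = 2 ∨ twoRank ↥N = 3) :=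
  stmt_9_general n hn B N hmax
end

section
/- Let V be a 4-dimensional ℚ₂-vector space with a symplectic form, and let ζ be a symplectic similitude of a free ℤ/2ⁿℤ-module M = (ℤ/2ⁿℤ)⁴ (with nondegenerate alternating pairing) that stabilizes every maximal isotropic subgroup of M. Then ζ is a scalar automorphism, i.e., ζ(x) = r·x for some fixed unit r ∈ (ℤ/2ⁿℤ)^× and all x ∈ M. -/
/-!
Over the local ring `ℤ/2ⁿℤ`, nondegeneracy represents every coordinate functional by a vector,
and locality turns this into a unit pairing between two vectors of a spanning set; splitting off
hyperbolic planes gives a symplectic basis `e₁, f₁, e₂, f₂` of `(ℤ/2ⁿℤ)⁴`. Each basis vector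
spans the intersection of two Lagrangian planes spanned by basis vectors
(e.g. `⟨e₁⟩ = ⟨e₁, e₂⟩ ∩ ⟨e₁, f₂⟩`), so `ζ` scales it, and the Lagrangians of related symplectic
bases such as `(e₁ + e₂, f₁, e₂, f₂ - f₁)` force the four scalars to agree. Since `ζ` is
bijective, the common scalar is a unit.
-/

open Submodule

theorem ZMod.isLocalRing_prime_pow {p n : ℕ} [Fact p.Prime] (hn : n ≠ 0) :
    IsLocalRing (ZMod (p ^ n)) :=
  haveI : Fact (1 < p ^ n) := ⟨Nat.one_lt_pow hn (Fact.out : p.Prime).one_lt⟩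
  IsLocalRing.of_surjective' (PadicInt.toZModPow n) (ZMod.ringHom_surjective _)

theorem IsLocalRing.exists_isUnit_apply_of_span_eq_top {R M : Type*} [CommRing R]
    [IsLocalRing R] [AddCommGroup M] [Module R M] (φ : M →ₗ[R] R) {s : Set M}
    (hs : span R s = ⊤) {x : M} (hx : φ x = 1) : ∃ w ∈ s, IsUnit (φ w) := by
  by_contra! h
  have hle : span R s ≤ Submodule.comap φ (maximalIdeal R) := span_le.mpr h
  have hx' : φ x ∈ maximalIdeal R := hle (hs ▸ mem_top)
  simp [hx] at hx'

section Symplectic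

variable {R M : Type*} [CommRing R] [AddCommGroup M] [Module R M]

def IsLagrangian (B : M →ₗ[R] M →ₗ[R] R) (N : Submodule R M) : Prop :=
  (∀ x ∈ N, ∀ y ∈ N, B x y = 0) ∧ ∀ x, (∀ y ∈ N, B x y = 0) → x ∈ N

structure IsSymplecticBasis (B : M →ₗ[R] M →ₗ[R] R) (e₁ f₁ e₂ f₂ : M) : Prop where
  apply_e₁_f₁ : B e₁ f₁ = 1
  apply_e₂_f₂ : B e₂ f₂ = 1
  apply_e₁_e₂ : B e₁ e₂ = 0
  apply_e₁_f₂ : B e₁ f₂ = 0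
  apply_f₁_e₂ : B f₁ e₂ = 0
  apply_f₁_f₂ : B f₁ f₂ = 0
  /-- The four vectors span `M`; the coefficients are then forced to be these pairings. -/
  expand (x : M) : x = B x f₁ • e₁ - B x e₁ • f₁ + B x f₂ • e₂ - B x e₂ • f₂

namespace IsSymplecticBasis

variable {B : M →ₗ[R] M →ₗ[R] R} {e₁ f₁ e₂ f₂ : M}

theorem apply_e₂_e₁ (hB : B.IsAlt) (hb : IsSymplecticBasis B e₁ f₁ e₂ f₂) : B e₂ e₁ = 0 :=
  hB.eq_iff.mp hb.apply_e₁_e₂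

theorem apply_f₂_e₁ (hB : B.IsAlt) (hb : IsSymplecticBasis B e₁ f₁ e₂ f₂) : B f₂ e₁ = 0 :=
  hB.eq_iff.mp hb.apply_e₁_f₂

theorem apply_e₂_f₁ (hB : B.IsAlt) (hb : IsSymplecticBasis B e₁ f₁ e₂ f₂) : B e₂ f₁ = 0 :=
  hB.eq_iff.mp hb.apply_f₁_e₂

theorem apply_f₂_f₁ (hB : B.IsAlt) (hb : IsSymplecticBasis B e₁ f₁ e₂ f₂) : B f₂ f₁ = 0 :=
  hB.eq_iff.mp hb.apply_f₁_f₂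

theorem apply_f₂_e₂ (hB : B.IsAlt) (hb : IsSymplecticBasis B e₁ f₁ e₂ f₂) : B f₂ e₂ = -1 := by
  rw [← hB.neg, hb.apply_e₂_f₂]

theorem of_span_eq_top (hB : B.IsAlt)
    (h₁ : B e₁ f₁ = 1) (h₂ : B e₂ f₂ = 1) (h₃ : B e₁ e₂ = 0) (h₄ : B e₁ f₂ = 0)
    (h₅ : B f₁ e₂ = 0) (h₆ : B f₁ f₂ = 0) (hspan : span R {e₁, f₁, e₂, f₂} = ⊤) :
    IsSymplecticBasis B e₁ f₁ e₂ f₂ := by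
  refine ⟨h₁, h₂, h₃, h₄, h₅, h₆, fun x => ?_⟩
  let expansion : M →ₗ[R] M := (B.flip f₁).smulRight e₁ - (B.flip e₁).smulRight f₁ +
    (B.flip f₂).smulRight e₂ - (B.flip e₂).smulRight f₂
  have hgen : Set.EqOn (LinearMap.id : M →ₗ[R] M) expansion {e₁, f₁, e₂, f₂} := by
    simp [Set.EqOn, expansion, hB.self_eq_zero, h₁, h₂, h₃, h₄, h₅, h₆, ← hB.neg e₁ f₁,
      ← hB.neg e₂ f₂, ← hB.neg e₁ e₂, ← hB.neg e₁ f₂, ← hB.neg f₁ e₂, ← hB.neg f₁ f₂]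
  have hx : x ∈ span R {e₁, f₁, e₂, f₂} := hspan ▸ mem_top
  simpa [expansion] using LinearMap.eqOn_span' hgen hx

theorem swap (hB : B.IsAlt) (hb : IsSymplecticBasis B e₁ f₁ e₂ f₂) :
    IsSymplecticBasis B e₂ f₂ e₁ f₁ where
  apply_e₁_f₁ := hb.apply_e₂_f₂
  apply_e₂_f₂ := hb.apply_e₁_f₁
  apply_e₁_e₂ := hb.apply_e₂_e₁ hB
  apply_e₁_f₂ := hb.apply_e₂_f₁ hB
  apply_f₁_e₂ := hb.apply_f₂_e₁ hB
  apply_f₁_f₂ := hb.apply_f₂_f₁ hB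
  expand x := (hb.expand x).trans (by abel)

theorem rotate (hB : B.IsAlt) (hb : IsSymplecticBasis B e₁ f₁ e₂ f₂) :
    IsSymplecticBasis B e₁ f₁ f₂ (-e₂) where
  apply_e₁_f₁ := hb.apply_e₁_f₁
  apply_e₂_f₂ := by rw [map_neg, hb.apply_f₂_e₂ hB, neg_neg]
  apply_e₁_e₂ := hb.apply_e₁_f₂
  apply_e₁_f₂ := by rw [map_neg, hb.apply_e₁_e₂, neg_zero]
  apply_f₁_e₂ := hb.apply_f₁_f₂
  apply_f₁_f₂ := by rw [map_neg, hb.apply_f₁_e₂, neg_zero]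
  expand x := (hb.expand x).trans (by simp only [map_neg]; module)

theorem add (hB : B.IsAlt) (hb : IsSymplecticBasis B e₁ f₁ e₂ f₂) :
    IsSymplecticBasis B (e₁ + e₂) f₁ e₂ (f₂ - f₁) where
  apply_e₁_f₁ := by rw [map_add, LinearMap.add_apply, hb.apply_e₁_f₁, hb.apply_e₂_f₁ hB, add_zero]
  apply_e₂_f₂ := by rw [map_sub, hb.apply_e₂_f₂, hb.apply_e₂_f₁ hB, sub_zero]
  apply_e₁_e₂ := by rw [map_add, LinearMap.add_apply, hb.apply_e₁_e₂, hB.self_eq_zero, add_zero]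
  apply_e₁_f₂ := by
    simp only [map_add, map_sub, LinearMap.add_apply, hb.apply_e₁_f₂, hb.apply_e₁_f₁,
      hb.apply_e₂_f₂, hb.apply_e₂_f₁ hB]
    ring
  apply_f₁_e₂ := hb.apply_f₁_e₂
  apply_f₁_f₂ := by rw [map_sub, hb.apply_f₁_f₂, hB.self_eq_zero, sub_zero]
  expand x := (hb.expand x).trans (by simp only [map_add, map_sub]; module)

theorem isLagrangian_span (hB : B.IsAlt) (hb : IsSymplecticBasis B e₁ f₁ e₂ f₂) :
    IsLagrangian B (span R {e₁, e₂}) := by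
  refine ⟨fun x hx y hy => ?_, fun x hx => ?_⟩
  · obtain ⟨a, b, rfl⟩ := mem_span_pair.mp hx
    obtain ⟨c, d, rfl⟩ := mem_span_pair.mp hy
    simp [hB.self_eq_zero, hb.apply_e₁_e₂, hb.apply_e₂_e₁ hB]
  · have h₁ := hx e₁ (subset_span (by simp))
    have h₂ := hx e₂ (subset_span (by simp))
    rw [hb.expand x, h₁, h₂]
    exact mem_span_pair.mpr ⟨_, _, by module⟩

variable {ζ : M →ₗ[R] M}

theorem map_e₁_eq_smul (hB : B.IsAlt) (hb : IsSymplecticBasis B e₁ f₁ e₂ f₂)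
    (hζ : ∀ N, IsLagrangian B N → ∀ x ∈ N, ζ x ∈ N) : ζ e₁ = B (ζ e₁) f₁ • e₁ := by
  have mem_span (x y : M) : x ∈ span R {x, y} := subset_span (by simp)
  have h₁ := hζ _ (hb.isLagrangian_span hB) e₁ (mem_span _ _)
  have h₂ := hζ _ ((hb.rotate hB).isLagrangian_span hB) e₁ (mem_span _ _)
  have he₁ : B (ζ e₁) e₁ = 0 := (hb.isLagrangian_span hB).1 _ h₁ _ (mem_span _ _)
  have he₂ : B (ζ e₁) e₂ = 0 := (hb.isLagrangian_span hB).1 _ h₁ _ (subset_span (by simp))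
  have hf₂ : B (ζ e₁) f₂ = 0 :=
    ((hb.rotate hB).isLagrangian_span hB).1 _ h₂ _ (subset_span (by simp))
  conv_lhs => rw [hb.expand (ζ e₁), he₁, he₂, hf₂]
  module

theorem map_e₂_eq_smul (hB : B.IsAlt) (hb : IsSymplecticBasis B e₁ f₁ e₂ f₂)
    (hζ : ∀ N, IsLagrangian B N → ∀ x ∈ N, ζ x ∈ N) : ζ e₂ = B (ζ e₁) f₁ • e₂ := by
  have h₁ := hb.map_e₁_eq_smul hB hζ
  have h₂ := (hb.swap hB).map_e₁_eq_smul hB hζ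
  have h₁₂ := (hb.add hB).map_e₁_eq_smul hB hζ
  set r := B (ζ e₁) f₁
  set t := B (ζ e₂) f₂
  set s := B (ζ (e₁ + e₂)) f₁
  have hsum : r • e₁ + t • e₂ = s • (e₁ + e₂) := by rw [← h₁, ← h₂, ← map_add, ← h₁₂]
  have hr : r = s := by
    simpa [hb.apply_e₁_f₁, hb.apply_e₂_f₁ hB] using congrArg (B · f₁) hsum
  have ht : t = s := by
    simpa [hb.apply_e₁_f₂, hb.apply_e₂_f₂] using congrArg (B · f₂) hsum
  rw [h₂, ht, hr]

theorem map_eq_smul (hB : B.IsAlt) (hb : IsSymplecticBasis B e₁ f₁ e₂ f₂)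
    (hζ : ∀ N, IsLagrangian B N → ∀ x ∈ N, ζ x ∈ N) (x : M) : ζ x = B (ζ e₁) f₁ • x := by
  have h₁ := hb.map_e₁_eq_smul hB hζ
  have h₂ := hb.map_e₂_eq_smul hB hζ
  have hf₂ := (hb.rotate hB).map_e₂_eq_smul hB hζ
  have hf₁ := ((hb.swap hB).rotate hB).map_e₂_eq_smul hB hζ
  rw [h₂, map_smul, LinearMap.smul_apply, hb.apply_e₂_f₂, smul_eq_mul, mul_one] at hf₁
  generalize B (ζ e₁) f₁ = r at h₁ h₂ hf₁ hf₂ ⊢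
  conv_lhs => rw [hb.expand x]
  simp only [map_add, map_sub, map_smul, h₁, h₂, hf₁, hf₂]
  conv_rhs => rw [hb.expand x]
  module

end IsSymplecticBasis

def orthProj (B : M →ₗ[R] M →ₗ[R] R) (e f v : M) : M := v - B v f • e + B v e • f

variable {B : M →ₗ[R] M →ₗ[R] R} {e f : M}

theorem orthProj_apply_left (hB : B.IsAlt) (h : B e f = 1) (v : M) :
    B (orthProj B e f v) e = 0 := by
  simp [orthProj, hB.self_eq_zero, ← hB.neg e f, h]

theorem orthProj_apply_right (hB : B.IsAlt) (h : B e f = 1) (v : M) :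
    B (orthProj B e f v) f = 0 := by
  simp [orthProj, hB.self_eq_zero, h, mul_comm]

theorem apply_orthProj_left (hB : B.IsAlt) (h : B e f = 1) (v : M) :
    B e (orthProj B e f v) = 0 :=
  hB.eq_iff.mp (orthProj_apply_left hB h v)

theorem apply_orthProj_right (hB : B.IsAlt) (h : B e f = 1) (v : M) :
    B f (orthProj B e f v) = 0 :=
  hB.eq_iff.mp (orthProj_apply_right hB h v)

theorem mem_span_of_orthProj_mem {N : Submodule R M} (he : e ∈ N) (hf : f ∈ N) {v : M}
    (hv : orthProj B e f v ∈ N) : v ∈ N := by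
  have : v = orthProj B e f v + B v f • e - B v e • f := by
    simp only [orthProj]; abel
  rw [this]
  exact N.sub_mem (N.add_mem hv (N.smul_mem _ he)) (N.smul_mem _ hf)

end Symplectic

theorem Fin.exists_cover_four : ∀ j : Fin 4, j ≠ 0 →
    ∃ k l : Fin 4, k ≠ 0 ∧ k ≠ j ∧ ∀ m, m = 0 ∨ m = j ∨ m = k ∨ m = l := by
  decide

section LocalRing

variable {R M : Type*} [CommRing R] [IsLocalRing R] [AddCommGroup M] [Module R M]
  {B : M →ₗ[R] M →ₗ[R] R}

theorem IsSymplecticBasis.exists_of_span_eq_top (hB : B.IsAlt) {e f v w : M} (h : B e f = 1)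
    (hspan : span R {e, f, v, w} = ⊤) {x : M} (hx : B (orthProj B e f v) x = 1) :
    ∃ f₂, IsSymplecticBasis B e f (orthProj B e f v) f₂ := by
  set e₂ := orthProj B e f v
  set g := orthProj B e f w
  have hspan' : span R {e, f, e₂, g} = ⊤ := by
    refine eq_top_iff.mpr (hspan ▸ span_le.mpr ?_)
    have he : e ∈ span R {e, f, e₂, g} := subset_span (by simp)
    have hf : f ∈ span R {e, f, e₂, g} := subset_span (by simp)
    simp only [Set.insert_subset_iff, Set.singleton_subset_iff]
    exact ⟨he, hf, mem_span_of_orthProj_mem (B := B) he hf (subset_span (by simp [e₂])),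
      mem_span_of_orthProj_mem (B := B) he hf (subset_span (by simp [g]))⟩
  obtain ⟨g', hg', ht⟩ := IsLocalRing.exists_isUnit_apply_of_span_eq_top (B e₂) hspan' hx
  obtain rfl : g' = g := by
    rcases hg' with rfl | rfl | rfl | rfl
    · simp [e₂, orthProj_apply_left hB h] at ht
    · simp [e₂, orthProj_apply_right hB h] at ht
    · simp [hB.self_eq_zero] at ht
    · rfl
  obtain ⟨t, ht⟩ := ht
  refine ⟨t⁻¹ • g, .of_span_eq_top hB h ?_ (apply_orthProj_left hB h v) ?_
    (apply_orthProj_right hB h v) ?_ (eq_top_iff.mpr (hspan' ▸ span_le.mpr ?_))⟩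
  · simp [← ht, Units.smul_def]
  · simp [g, apply_orthProj_left hB h w]
  · simp [g, apply_orthProj_right hB h w]
  · simp only [Set.insert_subset_iff, Set.singleton_subset_iff]
    exact ⟨subset_span (by simp), subset_span (by simp), subset_span (by simp),
      (smul_mem_iff' _ t⁻¹).mp (subset_span (by simp))⟩

theorem exists_isSymplecticBasis (B : (Fin 4 → R) →ₗ[R] (Fin 4 → R) →ₗ[R] R) (hB : B.IsAlt)
    (hsurj : Function.Surjective B.flip) : ∃ e₁ f₁ e₂ f₂, IsSymplecticBasis B e₁ f₁ e₂ f₂ := by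
  have coord (m : Fin 4) : ∃ x, ∀ y, B y x = y m := by
    obtain ⟨x, hx⟩ := hsurj (LinearMap.proj m)
    exact ⟨x, fun y => LinearMap.congr_fun hx y⟩
  let E := Pi.basisFun R (Fin 4)
  obtain ⟨x, hx⟩ := coord 0
  obtain ⟨_, ⟨j, rfl⟩, hj⟩ :=
    IsLocalRing.exists_isUnit_apply_of_span_eq_top (B (E 0)) E.span_eq (x := x) (by simp [E, hx])
  have hj0 : j ≠ 0 := by
    rintro rfl
    simp [hB.self_eq_zero] at hj
  obtain ⟨k, l, hk0, hkj, hcover⟩ := Fin.exists_cover_four j hj0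
  set f₁ := (↑hj.unit⁻¹ : R) • E j
  have h₁ : B (E 0) f₁ = 1 := by simp [f₁]
  have hspan : span R {E 0, f₁, E k, E l} = ⊤ := by
    refine eq_top_iff.mpr (E.span_eq ▸ span_le.mpr ?_)
    rintro _ ⟨m, rfl⟩
    rcases hcover m with rfl | rfl | rfl | rfl
    · exact subset_span (by simp)
    · have : E m = (hj.unit : R) • f₁ := by simp [f₁, smul_smul]
      rw [this]
      exact smul_mem _ _ (subset_span (by simp))
    · exact subset_span (by simp)
    · exact subset_span (by simp)
  obtain ⟨y, hy⟩ := coord k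
  -- `orthProj` only changes coordinates `0` and `j`, so the `k`-th coordinate stays `1`.
  obtain ⟨f₂, hb⟩ := IsSymplecticBasis.exists_of_span_eq_top hB h₁ hspan (x := y)
    (by simp [hy, orthProj, f₁, E, hk0, hkj])
  exact ⟨_, _, _, _, hb⟩

end LocalRing

theorem stmt_14_general (n : ℕ) (hn : 1 ≤ n)
    (B : (Fin 4 → ZMod (2 ^ n)) →ₗ[ZMod (2 ^ n)] (Fin 4 → ZMod (2 ^ n))
      →ₗ[ZMod (2 ^ n)] ZMod (2 ^ n))
    (halt : ∀ x, B x x = 0)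
    (hnd : Function.Bijective fun x => B.flip x)
    (ζ : (Fin 4 → ZMod (2 ^ n)) ≃ₗ[ZMod (2 ^ n)] (Fin 4 → ZMod (2 ^ n)))
    (hstab : ∀ N : Submodule (ZMod (2 ^ n)) (Fin 4 → ZMod (2 ^ n)),
      ((∀ x ∈ N, ∀ y ∈ N, B x y = 0) ∧ ∀ x, (∀ y ∈ N, B x y = 0) → x ∈ N) →
        Submodule.map (ζ : (Fin 4 → ZMod (2 ^ n)) →ₗ[ZMod (2 ^ n)]
          (Fin 4 → ZMod (2 ^ n))) N = N) :
    ∃ r : (ZMod (2 ^ n))ˣ, ∀ x, ζ x = (r : ZMod (2 ^ n)) • x := by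
  have := ZMod.isLocalRing_prime_pow (p := 2) (show n ≠ 0 by omega)
  obtain ⟨e₁, f₁, e₂, f₂, hb⟩ := exists_isSymplecticBasis B halt hnd.surjective
  have hscalar : ∀ x, ζ x = B (ζ e₁) f₁ • x :=
    hb.map_eq_smul halt fun N hN x hx => hstab N hN ▸ mem_map_of_mem hx
  set r := B (ζ e₁) f₁
  have hr : r * B (ζ.symm e₁) f₁ = 1 := by
    calc r * B (ζ.symm e₁) f₁ = B (ζ (ζ.symm e₁)) f₁ := by rw [hscalar]; simp
      _ = 1 := by rw [ζ.apply_symm_apply, hb.apply_e₁_f₁]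
  exact ⟨.mkOfMulEqOne _ _ hr, hscalar⟩

/-- A symplectic similitude `ζ` of `M = (ℤ/2ⁿℤ)⁴` (with a nondegenerate
alternating pairing) stabilizing every maximal isotropic subgroup of `M` is a
scalar automorphism: `ζ x = r • x` for a fixed unit `r` and all `x`. -/
theorem stmt_14 (n : ℕ) (hn : 1 ≤ n)
    (B : (Fin 4 → ZMod (2 ^ n)) →ₗ[ZMod (2 ^ n)] (Fin 4 → ZMod (2 ^ n))
      →ₗ[ZMod (2 ^ n)] ZMod (2 ^ n))
    (halt : ∀ x, B x x = 0)
    (hnd : Function.Bijective fun x => B.flip x)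
    (ζ : (Fin 4 → ZMod (2 ^ n)) ≃ₗ[ZMod (2 ^ n)] (Fin 4 → ZMod (2 ^ n)))
    (hsim : ∃ c : (ZMod (2 ^ n))ˣ, ∀ x y, B (ζ x) (ζ y) = (c : ZMod (2 ^ n)) * B x y)
    (hstab : ∀ N : Submodule (ZMod (2 ^ n)) (Fin 4 → ZMod (2 ^ n)),
      ((∀ x ∈ N, ∀ y ∈ N, B x y = 0) ∧ ∀ x, (∀ y ∈ N, B x y = 0) → x ∈ N) →
        Submodule.map (ζ : (Fin 4 → ZMod (2 ^ n)) →ₗ[ZMod (2 ^ n)]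
          (Fin 4 → ZMod (2 ^ n))) N = N) :
    ∃ r : (ZMod (2 ^ n))ˣ, ∀ x, ζ x = (r : ZMod (2 ^ n)) • x :=
  stmt_14_general n hn B halt hnd ζ hstab
end

section
/- Let M = (ℤ/2ⁿℤ)⁴ with a nondegenerate alternating pairing and let P ∈ M be an element of order 2ⁿ. Then the intersection of all maximal isotropic subgroups of M containing P is the cyclic subgroup ⟨P⟩ generated by P. -/
/-!
Since `P` has order `2ⁿ`, the element `2ⁿ⁻¹ • P` is nonzero, and as every non-unit of
`ℤ/2ⁿ` is killed by `2ⁿ⁻¹`, nondegeneracy gives `f` with `B P f = 1`. The orthogonal `W` of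
the hyperbolic plane `⟨P, f⟩` is a direct summand of `M`, hence free of rank 2 over the local
ring `ℤ/2ⁿ`, and the same argument inside `W` produces a second hyperbolic pair `(Q, R)`.
In the symplectic basis `(P, f, Q, R)` both `⟨P, Q⟩` and `⟨P, R⟩` are maximal isotropic, and
pairing with `R` shows that they meet in `⟨P⟩`.
-/

open Module Submodule

namespace LinearMap

variable {R M : Type*} [CommRing R] [AddCommGroup M] [Module R M]

def IsLagrangian (B : M →ₗ[R] M →ₗ[R] R) (N : Submodule R M) : Prop :=
  (∀ x ∈ N, ∀ y ∈ N, B x y = 0) ∧ ∀ x, (∀ y ∈ N, B x y = 0) → x ∈ N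

/-- For `B e f = 1`, the projection onto the orthogonal of `span {e, f}` along it. -/
def hyperbolicProj (B : M →ₗ[R] M →ₗ[R] R) (e f : M) : M →ₗ[R] M :=
  LinearMap.id - (B.flip f).smulRight e + (B.flip e).smulRight f

lemma hyperbolicProj_apply (B : M →ₗ[R] M →ₗ[R] R) (e f x : M) :
    B.hyperbolicProj e f x = x - B x f • e + B x e • f := by
  simp [hyperbolicProj]

lemma eq_add_hyperbolicProj (B : M →ₗ[R] M →ₗ[R] R) (e f x : M) :
    x = B x f • e - B x e • f + B.hyperbolicProj e f x := by
  rw [hyperbolicProj_apply]; abel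

namespace IsAlt

variable {B : M →ₗ[R] M →ₗ[R] R} {e f : M}

lemma hyperbolicProj_mem (hB : B.IsAlt) (hef : B e f = 1) (x : M) :
    B.hyperbolicProj e f x ∈ ker (B e) ⊓ ker (B f) := by
  have hfe : B f e = -1 := by rw [← hB.neg, hef]
  simp only [Submodule.mem_inf, mem_ker, hyperbolicProj_apply, map_add, map_sub, map_smul,
    smul_eq_mul, hB.self_eq_zero, hef, hfe, ← hB.neg x]
  constructor <;> ring

lemma apply_hyperbolicProj_right (hB : B.IsAlt) {w : M} (hw : w ∈ ker (B e) ⊓ ker (B f))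
    (x : M) : B w (B.hyperbolicProj e f x) = B w x := by
  obtain ⟨hwe, hwf⟩ := Submodule.mem_inf.1 hw
  rw [mem_ker, hB.eq_iff] at hwe hwf
  simp [hyperbolicProj_apply, hwe, hwf]

lemma apply_hyperbolicProj_left (hB : B.IsAlt) {w : M} (hw : w ∈ ker (B e) ⊓ ker (B f))
    (x : M) : B (B.hyperbolicProj e f x) w = B x w := by
  rw [← hB.neg, hB.apply_hyperbolicProj_right hw, hB.neg]

lemma isUnit_of_mem_span_pair (hB : B.IsAlt) {b₀ b₁ w : M} (hw : w ∈ span R {b₀, b₁})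
    (h : IsUnit (B b₀ w)) : IsUnit (B b₀ b₁) := by
  obtain ⟨a, c, rfl⟩ := mem_span_pair.1 hw
  simp only [map_add, map_smul, smul_eq_mul, hB.self_eq_zero, mul_zero, zero_add] at h
  exact isUnit_of_mul_isUnit_right h

lemma smul_eq_of_mem_span_pair (hB : B.IsAlt) {b₀ b₁ w : M} (hw : w ∈ span R {b₀, b₁}) :
    B b₀ b₁ • w = B w b₁ • b₀ - B w b₀ • b₁ := by
  obtain ⟨a, c, rfl⟩ := mem_span_pair.1 hw
  simp only [map_add, map_smul, LinearMap.add_apply, LinearMap.smul_apply, smul_eq_mul,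
    hB.self_eq_zero, ← hB.neg b₁ b₀]
  module

lemma isLagrangian_span_pair (hB : B.IsAlt) {e₁ f₁ e₂ f₂ : M} (h : B e₁ e₂ = 0)
    (hexp : ∀ x, x = B x f₁ • e₁ - B x e₁ • f₁ + (B x f₂ • e₂ - B x e₂ • f₂)) :
    B.IsLagrangian (span R {e₁, e₂}) := by
  refine ⟨fun x hx y hy => ?_, fun x hx => ?_⟩
  · obtain ⟨a, b, rfl⟩ := mem_span_pair.1 hx
    obtain ⟨c, d, rfl⟩ := mem_span_pair.1 hy
    simp only [map_add, map_smul, LinearMap.add_apply, LinearMap.smul_apply, smul_eq_mul,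
      hB.self_eq_zero, h, hB.eq_iff.1 h]
    ring
  · have h₁ := hx e₁ (subset_span (by simp))
    have h₂ := hx e₂ (subset_span (by simp))
    rw [hexp x, h₁, h₂]
    simp only [zero_smul, sub_zero]
    exact mem_span_pair.2 ⟨_, _, rfl⟩

lemma span_pair_inf_span_pair_le (hB : B.IsAlt) {e₁ e₂ f₂ : M} (h₁ : B e₁ f₂ = 0)
    (h₂ : B e₂ f₂ = 1) : span R {e₁, e₂} ⊓ span R {e₁, f₂} ≤ span R {e₁} := by
  rintro x ⟨hx, hx'⟩
  obtain ⟨a, b, rfl⟩ := mem_span_pair.1 hx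
  obtain ⟨c, d, hcd⟩ := mem_span_pair.1 hx'
  have hb : b = 0 := by
    simpa [h₁, h₂, hB.self_eq_zero] using congrArg (B · f₂) hcd.symm
  simp [hb, mem_span_singleton]

def hyperbolicSplitting (hB : B.IsAlt) (hef : B e f = 1) :
    M ≃ₗ[R] (R × R) × ↥(ker (B e) ⊓ ker (B f)) where
  toFun x := ((B x f, -B x e), ⟨B.hyperbolicProj e f x, hB.hyperbolicProj_mem hef x⟩)
  invFun t := t.1.1 • e + t.1.2 • f + t.2
  map_add' x y := by ext <;> simp [add_comm]
  map_smul' c x := by ext <;> simp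
  left_inv x := by simpa [sub_eq_add_neg] using (B.eq_add_hyperbolicProj e f x).symm
  right_inv := by
    rintro ⟨⟨a, b⟩, w, hw⟩
    have hfe : B f e = -1 := by rw [← hB.neg, hef]
    obtain ⟨hwe, hwf⟩ := Submodule.mem_inf.1 hw
    rw [mem_ker, hB.eq_iff] at hwe hwf
    ext <;> simp [hwe, hwf, hef, hfe, hB.self_eq_zero, hyperbolicProj_apply]
    abel

lemma finite_orthogonal [Module.Finite R M] (hB : B.IsAlt) (hef : B e f = 1) :
    Module.Finite R ↥(ker (B e) ⊓ ker (B f)) :=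
  let E := hB.hyperbolicSplitting hef
  .of_surjective (LinearMap.snd R _ _ ∘ₗ E.toLinearMap) fun w => ⟨E.symm (0, w), by simp⟩

variable [IsLocalRing R] [Module.Free R M] [Module.Finite R M]

lemma free_orthogonal (hB : B.IsAlt) (hef : B e f = 1) :
    Module.Free R ↥(ker (B e) ⊓ ker (B f)) := by
  let E := hB.hyperbolicSplitting hef
  have := hB.finite_orthogonal hef
  have : Module.Projective R ↥(ker (B e) ⊓ ker (B f)) :=
    .of_split (M := M) (E.symm.toLinearMap ∘ₗ LinearMap.inr R _ _)
      (LinearMap.snd R _ _ ∘ₗ E.toLinearMap) (by ext; simp)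
  exact Module.free_of_flat_of_isLocalRing

lemma finrank_orthogonal_add_two (hB : B.IsAlt) (hef : B e f = 1) :
    finrank R ↥(ker (B e) ⊓ ker (B f)) + 2 = finrank R M := by
  have := hB.finite_orthogonal hef
  have := hB.free_orthogonal hef
  rw [(hB.hyperbolicSplitting hef).finrank_eq, finrank_prod, finrank_prod, finrank_self]
  ring

end IsAlt

end LinearMap

namespace ZMod

variable {p : ℕ} [Fact p.Prime] {n : ℕ}

instance : IsLocalRing (ZMod (p ^ (n + 1))) :=
  have : Nontrivial (ZMod (p ^ (n + 1))) :=
    ZMod.nontrivial_iff.2 (Nat.one_lt_pow n.succ_ne_zero (Fact.out : p.Prime).one_lt).ne'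
  .of_surjective' (PadicInt.toZModPow (n + 1)) fun c => ⟨c.val, by simp⟩

lemma pow_mul_eq_zero_of_not_isUnit {c : ZMod (p ^ (n + 1))} (hc : ¬IsUnit c) :
    (p : ZMod (p ^ (n + 1))) ^ n * c = 0 := by
  rw [← ZMod.natCast_zmod_val c, ZMod.isUnit_iff_coprime] at hc
  obtain ⟨k, hk⟩ : p ∣ c.val := by
    by_contra h
    exact hc (((Fact.out : p.Prime).coprime_iff_not_dvd.2 h).symm.pow_right _)
  rw [← ZMod.natCast_zmod_val c, hk]
  push_cast
  rw [← mul_assoc, ← pow_succ, ← Nat.cast_pow, ZMod.natCast_self, zero_mul]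

end ZMod

namespace LinearMap

variable {p : ℕ} [Fact p.Prime] {n : ℕ} {M : Type*} [AddCommGroup M]
  [Module (ZMod (p ^ (n + 1))) M]
  {B : M →ₗ[ZMod (p ^ (n + 1))] M →ₗ[ZMod (p ^ (n + 1))] ZMod (p ^ (n + 1))}

lemma exists_apply_eq_one_of_pow_smul_ne_zero (hB : ∀ x, (∀ y, B x y = 0) → x = 0) {x : M}
    (hx : p ^ n • x ≠ 0) : ∃ y, B x y = 1 := by
  by_contra! h
  refine hx (hB _ fun y => ?_)
  have hy : ¬IsUnit (B x y) := fun hu => h (hu.unit⁻¹ • y) (by simp [Units.smul_def])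
  rw [map_nsmul, LinearMap.smul_apply, nsmul_eq_mul, Nat.cast_pow,
    ZMod.pow_mul_eq_zero_of_not_isUnit hy]

lemma IsAlt.exists_hyperbolic_pair_orthogonal [Module.Free (ZMod (p ^ (n + 1))) M]
    [Module.Finite (ZMod (p ^ (n + 1))) M] (hM : finrank (ZMod (p ^ (n + 1))) M = 4)
    (hB : B.IsAlt) (hnd : ∀ x, (∀ y, B x y = 0) → x = 0) {e f : M} (hef : B e f = 1) :
    ∃ e' ∈ ker (B e) ⊓ ker (B f), ∃ f' ∈ ker (B e) ⊓ ker (B f), B e' f' = 1 ∧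
      ∀ w ∈ ker (B e) ⊓ ker (B f), w = B w f' • e' - B w e' • f' := by
  set W := ker (B e) ⊓ ker (B f)
  have := hB.finite_orthogonal hef
  have := hB.free_orthogonal hef
  have hW : finrank (ZMod (p ^ (n + 1))) W = 2 := by
    have h : finrank _ W + 2 = finrank _ M := hB.finrank_orthogonal_add_two hef
    omega
  let b := Module.finBasisOfFinrankEq _ _ hW
  have hspan : ∀ w ∈ W, w ∈ span (ZMod (p ^ (n + 1))) {(b 0 : M), (b 1 : M)} := by
    intro w hw
    have := congrArg Subtype.val (b.sum_repr ⟨w, hw⟩)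
    rw [Fin.sum_univ_two] at this
    exact mem_span_pair.2 ⟨_, _, this⟩
  have hb₀ : p ^ n • (b 0 : M) ≠ 0 := by
    intro h
    have := congrArg (fun v => b.repr v 0) (Subtype.ext h : p ^ n • b 0 = 0)
    simp only [map_nsmul, b.repr_self, Finsupp.smul_single, Finsupp.single_eq_same,
      map_zero, Finsupp.coe_zero, Pi.zero_apply, nsmul_eq_mul, mul_one, Nat.cast_pow] at this
    rw [← Nat.cast_pow, ZMod.natCast_eq_zero_iff,
      Nat.pow_dvd_pow_iff_le_right (Fact.out : p.Prime).one_lt] at this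
    omega
  obtain ⟨y, hy⟩ := exists_apply_eq_one_of_pow_smul_ne_zero hnd hb₀
  obtain ⟨u, hu⟩ : IsUnit (B (b 0) (b 1)) :=
    hB.isUnit_of_mem_span_pair (hspan _ (hB.hyperbolicProj_mem hef y))
      (by rw [hB.apply_hyperbolicProj_right (b 0).2, hy]; exact isUnit_one)
  refine ⟨b 0, (b 0).2, u⁻¹ • (b 1 : M), W.smul_mem _ (b 1).2, ?_, fun w hw => ?_⟩
  · rw [Units.smul_def, map_smul, ← hu, smul_eq_mul, Units.inv_mul]
  · have hw' := hB.smul_eq_of_mem_span_pair (hspan w hw)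
    rw [← hu, ← Units.smul_def] at hw'
    calc w = u⁻¹ • (u • w) := (inv_smul_smul u w).symm
      _ = _ := by
        rw [hw']
        simp only [Units.smul_def, map_smul, smul_eq_mul, smul_sub, smul_smul, mul_comm]

end LinearMap

open LinearMap in
/-- In `M = (ℤ/2ⁿℤ)⁴` with a nondegenerate alternating pairing, for any element
`P` of order `2ⁿ`, the intersection of all maximal isotropic subgroups of `M`
containing `P` is the cyclic subgroup generated by `P`. -/
theorem stmt_15 (n : ℕ) (hn : 1 ≤ n)
    (B : (Fin 4 → ZMod (2 ^ n)) →ₗ[ZMod (2 ^ n)] (Fin 4 → ZMod (2 ^ n))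
      →ₗ[ZMod (2 ^ n)] ZMod (2 ^ n))
    (halt : ∀ x, B x x = 0)
    (hnd : Function.Bijective fun x => B.flip x)
    (P : Fin 4 → ZMod (2 ^ n)) (hP : addOrderOf P = 2 ^ n) :
    sInf {N : Submodule (ZMod (2 ^ n)) (Fin 4 → ZMod (2 ^ n)) |
        (∀ x ∈ N, ∀ y ∈ N, B x y = 0) ∧ (∀ x, (∀ y ∈ N, B x y = 0) → x ∈ N) ∧ P ∈ N}
      = Submodule.span (ZMod (2 ^ n)) {P} := by
  obtain ⟨n, rfl⟩ := Nat.exists_eq_add_of_le' hn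
  have hB : B.IsAlt := halt
  have hnd₀ : ∀ x, (∀ y, B x y = 0) → x = 0 := fun x hx =>
    hnd.injective (LinearMap.ext fun y => by simpa using hB.eq_iff.1 (hx y))
  have hP₀ : 2 ^ n • P ≠ 0 := fun h => by
    have := addOrderOf_dvd_of_nsmul_eq_zero h
    rw [hP, Nat.pow_dvd_pow_iff_le_right one_lt_two] at this
    omega
  obtain ⟨f, hf⟩ := exists_apply_eq_one_of_pow_smul_ne_zero hnd₀ hP₀
  obtain ⟨Q, hQ, R, hR, hQR, hW⟩ := hB.exists_hyperbolic_pair_orthogonal (by simp) hnd₀ hf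
  have hexp (x) : x = B x f • P - B x P • f + (B x R • Q - B x Q • R) := by
    have hx := hW _ (hB.hyperbolicProj_mem hf x)
    rw [hB.apply_hyperbolicProj_left hQ, hB.apply_hyperbolicProj_left hR] at hx
    rw [← hx]
    exact B.eq_add_hyperbolicProj P f x
  have hL₁ := hB.isLagrangian_span_pair (mem_inf.1 hQ).1 hexp
  have hL₂ := hB.isLagrangian_span_pair (e₂ := R) (f₂ := -Q) (mem_inf.1 hR).1 fun x =>
    (hexp x).trans (by simp only [map_neg, neg_smul, smul_neg, sub_neg_eq_add]; abel)
  refine le_antisymm ?_ (le_sInf fun N hN => span_le.2 (Set.singleton_subset_iff.2 hN.2.2))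
  refine (le_inf (sInf_le ?_) (sInf_le ?_)).trans
    (hB.span_pair_inf_span_pair_le (mem_inf.1 hR).1 hQR)
  · exact ⟨hL₁.1, hL₁.2, subset_span (by simp)⟩
  · exact ⟨hL₂.1, hL₂.2, subset_span (by simp)⟩
end
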